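/- arXiv:2205.15152 — 5 statements merged into one kernel-verified Lean document; each statement's English description precedes it below -/
import Mathlib

section
/- Let Ω = {ρ₁ < |x| < ρ₂} ⊂ ℝ² with 0 < ρ₁ < ρ₂, and let F be a smooth vector field on the closure of Ω satisfying rot F = 0, div F = 0 on Ω, F·n = 0 on ∂Ω, and having zero circulation around the inner boundary circle. Then F = 0 on Ω. -/
open Real Set
set_option maxHeartbeats 1000000

noncomputable def phiC : (ℝ × ℝ) →L[ℝ] ℂ :=
  Complex.ofRealCLM.comp (ContinuousLinearMap.fst ℝ ℝ ℝ)
    - Complex.I • Complex.ofRealCLM.comp (ContinuousLinearMap.snd ℝ ℝ ℝ)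

lemma phiC_apply (v : ℝ × ℝ) : phiC v = (v.1 : ℂ) - v.2 * Complex.I := by
  simp [phiC, mul_comm]

lemma sq_re_add_im (z : ℂ) : z.re ^ 2 + z.im ^ 2 = ‖z‖ ^ 2 := by
  rw [Complex.sq_norm, Complex.normSq_apply]; ring

lemma cr_step {g : ℂ → ℂ} {z : ℂ} {M : ℂ →L[ℝ] ℂ} (h : HasFDerivAt g M z)
    (h1 : M Complex.I = M 1 * Complex.I) :
    HasDerivAt g (M 1) z := by
  have H : (ContinuousLinearMap.smulRight (1 : ℂ →L[ℂ] ℂ) (M 1)).restrictScalars ℝ = M := by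
    ext w
    calc (ContinuousLinearMap.smulRight (1 : ℂ →L[ℂ] ℂ) (M 1)).restrictScalars ℝ w
        = ((w.re : ℂ) + (w.im : ℂ) * Complex.I) * M 1 := by simp [Complex.re_add_im]
      _ = (w.re : ℂ) * M 1 + (w.im : ℂ) * (M 1 * Complex.I) := by ring
      _ = (w.re : ℂ) * M 1 + (w.im : ℂ) * M Complex.I := by rw [h1]
      _ = M (w.re • (1:ℂ)) + M (w.im • Complex.I) := by
          rw [map_smul, map_smul]; simp [Complex.real_smul]
      _ = M w := by
          rw [← map_add]; congr 1
          simp [Complex.real_smul, Complex.re_add_im]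
  have := (hasFDerivAt_of_restrictScalars ℝ h H).hasDerivAt
  simpa using this

lemma partial_deriv_eq {F : ℝ × ℝ → ℝ × ℝ} {p : ℝ × ℝ} (hF : DifferentiableAt ℝ F p) :
    (deriv (fun t => (F (t, p.2)).1) p.1 = (fderiv ℝ F p (1,0)).1
    ∧ deriv (fun t => (F (t, p.2)).2) p.1 = (fderiv ℝ F p (1,0)).2)
    ∧ deriv (fun t => (F (p.1, t)).1) p.2 = (fderiv ℝ F p (0,1)).1
    ∧ deriv (fun t => (F (p.1, t)).2) p.2 = (fderiv ℝ F p (0,1)).2 := by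
  have hc : HasDerivAt (fun t : ℝ => (t, p.2)) ((1:ℝ),(0:ℝ)) p.1 :=
    (hasDerivAt_id p.1).prodMk (hasDerivAt_const _ _)
  have hc' : HasDerivAt (fun t : ℝ => (p.1, t)) ((0:ℝ),(1:ℝ)) p.2 :=
    (hasDerivAt_const _ _).prodMk (hasDerivAt_id p.2)
  have h2 : HasDerivAt (fun t => F (t, p.2)) (fderiv ℝ F p (1,0)) p.1 := by
    exact (hF.hasFDerivAt.comp_hasDerivAt p.1 hc)
  have h2' : HasDerivAt (fun t => F (p.1, t)) (fderiv ℝ F p (0,1)) p.2 := by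
    exact (hF.hasFDerivAt.comp_hasDerivAt p.2 hc')
  exact ⟨⟨(((ContinuousLinearMap.fst ℝ ℝ ℝ).hasFDerivAt).comp_hasDerivAt p.1 h2).deriv,
        (((ContinuousLinearMap.snd ℝ ℝ ℝ).hasFDerivAt).comp_hasDerivAt p.1 h2).deriv⟩,
        (((ContinuousLinearMap.fst ℝ ℝ ℝ).hasFDerivAt).comp_hasDerivAt p.2 h2').deriv,
        (((ContinuousLinearMap.snd ℝ ℝ ℝ).hasFDerivAt).comp_hasDerivAt p.2 h2').deriv⟩

/-- A smooth vector field on the closed annulus with vanishing curl and divergence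
on the annulus, vanishing normal component on the boundary, and zero circulation
around the inner boundary circle, is identically zero on the annulus. -/
theorem stmt2 (ρ₁ ρ₂ : ℝ) (hρ₁ : 0 < ρ₁) (hρ : ρ₁ < ρ₂)
    (F : ℝ × ℝ → ℝ × ℝ)
    (hsmooth : ContDiffOn ℝ (⊤ : ℕ∞) F {p : ℝ × ℝ | ρ₁ ^ 2 ≤ p.1 ^ 2 + p.2 ^ 2 ∧ p.1 ^ 2 + p.2 ^ 2 ≤ ρ₂ ^ 2})
    -- rot F = 0 on Ω
    (hrot : ∀ p : ℝ × ℝ, ρ₁ ^ 2 < p.1 ^ 2 + p.2 ^ 2 → p.1 ^ 2 + p.2 ^ 2 < ρ₂ ^ 2 →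
      deriv (fun t => (F (t, p.2)).2) p.1 - deriv (fun t => (F (p.1, t)).1) p.2 = 0)
    -- div F = 0 on Ω
    (hdiv : ∀ p : ℝ × ℝ, ρ₁ ^ 2 < p.1 ^ 2 + p.2 ^ 2 → p.1 ^ 2 + p.2 ^ 2 < ρ₂ ^ 2 →
      deriv (fun t => (F (t, p.2)).1) p.1 + deriv (fun t => (F (p.1, t)).2) p.2 = 0)
    -- F · n = 0 on ∂Ω (normal is radial on each boundary circle)
    (hbd : ∀ p : ℝ × ℝ, (p.1 ^ 2 + p.2 ^ 2 = ρ₁ ^ 2 ∨ p.1 ^ 2 + p.2 ^ 2 = ρ₂ ^ 2) →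
      (F p).1 * p.1 + (F p).2 * p.2 = 0)
    -- zero circulation around the inner boundary
    (hcirc : ∫ t in (0 : ℝ)..(2 * Real.pi),
        ((F (ρ₁ * Real.cos t, ρ₁ * Real.sin t)).1 * (-(ρ₁ * Real.sin t))
          + (F (ρ₁ * Real.cos t, ρ₁ * Real.sin t)).2 * (ρ₁ * Real.cos t)) = 0) :
    ∀ p : ℝ × ℝ, ρ₁ ^ 2 < p.1 ^ 2 + p.2 ^ 2 → p.1 ^ 2 + p.2 ^ 2 < ρ₂ ^ 2 → F p = 0 := by
  have hρ₂ : 0 < ρ₂ := hρ₁.trans hρ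
  set S : Set (ℝ × ℝ) := {p : ℝ × ℝ | ρ₁ ^ 2 ≤ p.1 ^ 2 + p.2 ^ 2 ∧ p.1 ^ 2 + p.2 ^ 2 ≤ ρ₂ ^ 2}
    with hS_def
  set A : Set ℂ := {z : ℂ | ρ₁ ^ 2 < z.re ^ 2 + z.im ^ 2 ∧ z.re ^ 2 + z.im ^ 2 < ρ₂ ^ 2}
    with hA_def
  set K : Set ℂ := {z : ℂ | ρ₁ ^ 2 ≤ z.re ^ 2 + z.im ^ 2 ∧ z.re ^ 2 + z.im ^ 2 ≤ ρ₂ ^ 2}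
    with hK_def
  set g : ℂ → ℂ := fun z => phiC (F (z.re, z.im)) with hg_def
  set h : ℂ → ℂ := fun z => z * g z with hh_def
  have hcont2 : Continuous fun z : ℂ => z.re ^ 2 + z.im ^ 2 := by continuity
  have hAopen : IsOpen A :=
    (isOpen_lt continuous_const hcont2).inter (isOpen_lt hcont2 continuous_const)
  have hKclosed : IsClosed K :=
    (isClosed_le continuous_const hcont2).inter (isClosed_le hcont2 continuous_const)
  have hAK : A ⊆ K := fun z hz => ⟨hz.1.le, hz.2.le⟩
  have hclosA : closure A ⊆ K := closure_minimal hAK hKclosed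
  have hmapsS : ∀ z ∈ K, ((z.re, z.im) : ℝ × ℝ) ∈ S := fun z hz => hz
  have hg_cont : ContinuousOn g K := by
    apply phiC.continuous.comp_continuousOn
    exact hsmooth.continuousOn.comp
      ((Complex.continuous_re.prodMk Complex.continuous_im).continuousOn) hmapsS
  have hh_cont : ContinuousOn h K := continuousOn_id.mul hg_cont
  -- complex differentiability of g on A
  have hg_diff : ∀ z ∈ A, DifferentiableAt ℂ g z := by
    intro z hz
    have hOopen : IsOpen {q : ℝ × ℝ | ρ₁ ^ 2 < q.1 ^ 2 + q.2 ^ 2 ∧ q.1 ^ 2 + q.2 ^ 2 < ρ₂ ^ 2} := by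
      have hc : Continuous fun q : ℝ × ℝ => q.1 ^ 2 + q.2 ^ 2 := by continuity
      exact (isOpen_lt continuous_const hc).inter (isOpen_lt hc continuous_const)
    have hpO : ((z.re, z.im) : ℝ × ℝ) ∈
        {q : ℝ × ℝ | ρ₁ ^ 2 < q.1 ^ 2 + q.2 ^ 2 ∧ q.1 ^ 2 + q.2 ^ 2 < ρ₂ ^ 2} := hz
    have hSnhds : S ∈ nhds ((z.re, z.im) : ℝ × ℝ) :=
      Filter.mem_of_superset (hOopen.mem_nhds hpO) (fun q hq => ⟨hq.1.le, hq.2.le⟩)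
    have hFd : DifferentiableAt ℝ F (z.re, z.im) :=
      (hsmooth.contDiffAt hSnhds).differentiableAt (by simp)
    set L := fderiv ℝ F ((z.re, z.im) : ℝ × ℝ) with hL_def
    obtain ⟨⟨d1, d2⟩, d3, d4⟩ := partial_deriv_eq hFd
    have hr := hrot (z.re, z.im) hz.1 hz.2
    have hd := hdiv (z.re, z.im) hz.1 hz.2
    rw [d2, d3] at hr
    rw [d1, d4] at hd
    set ψ : ℂ →L[ℝ] ℝ × ℝ := Complex.reCLM.prod Complex.imCLM with hψ_def
    have hψ : HasFDerivAt (fun u : ℂ => ((u.re, u.im) : ℝ × ℝ)) ψ z := ψ.hasFDerivAt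
    have hcomp : HasFDerivAt g ((phiC.comp L).comp ψ) z :=
      phiC.hasFDerivAt.comp z ((hFd.hasFDerivAt.comp z hψ))
    set M : ℂ →L[ℝ] ℂ := (phiC.comp L).comp ψ with hM_def
    have hψ1 : ψ 1 = ((1 : ℝ), (0 : ℝ)) := by simp [hψ_def]
    have hψI : ψ Complex.I = ((0 : ℝ), (1 : ℝ)) := by simp [hψ_def]
    have hM1 : M 1 = ((L (1,0)).1 : ℂ) - ((L (1,0)).2 : ℂ) * Complex.I := by
      rw [hM_def]; simp only [ContinuousLinearMap.coe_comp', Function.comp_apply, hψ1]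
      rw [phiC_apply]
    have hMI : M Complex.I = ((L (0,1)).1 : ℂ) - ((L (0,1)).2 : ℂ) * Complex.I := by
      rw [hM_def]; simp only [ContinuousLinearMap.coe_comp', Function.comp_apply, hψI]
      rw [phiC_apply]
    have e1 : (L (0,1)).1 = (L (1,0)).2 := by linarith
    have e2 : (L (0,1)).2 = -(L (1,0)).1 := by linarith
    have h1 : M Complex.I = M 1 * Complex.I := by
      rw [hMI, hM1, e1, e2]
      have hI : Complex.I * Complex.I = -1 := Complex.I_mul_I
      push_cast
      linear_combination ((L (1,0)).2 : ℂ) * hI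
    exact (cr_step hcomp h1).differentiableAt
  have hh_diff : DifferentiableOn ℂ h A :=
    differentiableOn_id.mul (fun z hz => (hg_diff z hz).differentiableWithinAt)
  -- Re h = 0 on frontier A
  have hfront : ∀ w ∈ frontier A, (h w).re = 0 := by
    intro w hw
    rw [hAopen.frontier_eq] at hw
    have hwK : w ∈ K := hclosA hw.1
    have hbnd : w.re ^ 2 + w.im ^ 2 = ρ₁ ^ 2 ∨ w.re ^ 2 + w.im ^ 2 = ρ₂ ^ 2 := by
      rcases hwK with ⟨h1', h2'⟩
      by_contra hcon
      push_neg at hcon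
      exact hw.2 ⟨lt_of_le_of_ne h1' (Ne.symm hcon.1), lt_of_le_of_ne h2' hcon.2⟩
    have hb := hbd (w.re, w.im) hbnd
    simp only [hh_def, hg_def, phiC_apply]
    simp [Complex.mul_re, Complex.sub_re, Complex.sub_im]
    linarith [hb]
  -- maximum modulus : Re h = 0 on closure A
  have hre0 : ∀ z ∈ closure A, (h z).re = 0 := by
    have hbound : Bornology.IsBounded A := by
      apply (Metric.isBounded_ball (x := (0:ℂ)) (r := ρ₂ + 1)).subset
      intro u hu
      have h1 : ‖u‖ ^ 2 = u.re ^ 2 + u.im ^ 2 := (sq_re_add_im u).symm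
      have : ‖u‖ < ρ₂ + 1 := by nlinarith [norm_nonneg u, hu.2]
      simpa [Metric.mem_ball, Complex.dist_eq] using this
    intro z hz
    have hd1 : DiffContOnCl ℂ (fun z => Complex.exp (h z)) A :=
      ⟨hh_diff.cexp, Complex.continuous_exp.comp_continuousOn (hh_cont.mono hclosA)⟩
    have hd2 : DiffContOnCl ℂ (fun z => Complex.exp (-h z)) A :=
      ⟨hh_diff.neg.cexp, Complex.continuous_exp.comp_continuousOn (hh_cont.mono hclosA).neg⟩
    have hb1 : ∀ u ∈ frontier A, ‖Complex.exp (h u)‖ ≤ 1 := by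
      intro u hu
      rw [Complex.norm_exp, hfront u hu]; simp
    have hb2 : ∀ u ∈ frontier A, ‖Complex.exp (-h u)‖ ≤ 1 := by
      intro u hu
      rw [Complex.norm_exp]
      simp [hfront u hu]
    have e1 := Complex.norm_le_of_forall_mem_frontier_norm_le hbound hd1 hb1 hz
    have e2 := Complex.norm_le_of_forall_mem_frontier_norm_le hbound hd2 hb2 hz
    rw [Complex.norm_exp] at e1 e2
    simp only [Complex.neg_re] at e2
    have f1 := Real.exp_le_one_iff.mp e1
    have f2 := Real.exp_le_one_iff.mp e2
    linarith
  -- A is preconnected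
  have hApre : IsPreconnected A := by
    have himg : A = (fun q : ℝ × ℝ => (q.1 : ℂ) * Complex.exp (q.2 * Complex.I)) ''
        (Ioo ρ₁ ρ₂ ×ˢ univ) := by
      ext z
      constructor
      · intro hz
        have h1 : ‖z‖ ^ 2 = z.re ^ 2 + z.im ^ 2 := (sq_re_add_im z).symm
        have hr1 : ρ₁ < ‖z‖ := by nlinarith [norm_nonneg z, hz.1]
        have hr2 : ‖z‖ < ρ₂ := by nlinarith [norm_nonneg z, hz.2]
        exact ⟨(‖z‖, Complex.arg z), ⟨⟨hr1, hr2⟩, mem_univ _⟩,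
          Complex.norm_mul_exp_arg_mul_I z⟩
      · rintro ⟨⟨r, t⟩, ⟨⟨hr1, hr2⟩, -⟩, rfl⟩
        have hrpos : 0 < r := hρ₁.trans hr1
        have habs : ‖(r : ℂ) * Complex.exp ((t : ℝ) * Complex.I)‖ = r := by
          rw [norm_mul, Complex.norm_exp_ofReal_mul_I, Complex.norm_real, Real.norm_eq_abs, abs_of_pos hrpos]
          ring
        constructor
        · rw [sq_re_add_im, habs]; nlinarith
        · rw [sq_re_add_im, habs]; nlinarith
    rw [himg]
    exact (isPreconnected_Ioo.prod isPreconnected_univ).image _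
      (by continuity : Continuous fun q : ℝ × ℝ =>
        (q.1 : ℂ) * Complex.exp (q.2 * Complex.I)).continuousOn
  -- base point
  have hz₀ : (((ρ₁ + ρ₂) / 2 : ℝ) : ℂ) ∈ A := by
    constructor <;> simp <;> nlinarith
  -- h is constant on A
  obtain ⟨w, hw⟩ : ∃ w : ℂ, ∀ z ∈ A, h z = w := by
    rcases (hh_diff.analyticOnNhd hAopen).is_constant_or_isOpen hApre with hc | hopen
    · obtain ⟨w, hwc⟩ := hc
      exact ⟨w, hwc⟩
    · exfalso
      have himg : IsOpen (h '' A) := hopen A subset_rfl hAopen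
      have hmem : h (((ρ₁ + ρ₂) / 2 : ℝ) : ℂ) ∈ h '' A := mem_image_of_mem h hz₀
      rcases Metric.isOpen_iff.mp himg _ hmem with ⟨ε, hε, hball⟩
      have hmem2 : h (((ρ₁ + ρ₂) / 2 : ℝ) : ℂ) + ((ε/2 : ℝ) : ℂ) ∈ h '' A := by
        apply hball
        simp only [Metric.mem_ball, Complex.dist_eq, add_sub_cancel_left]
        rw [Complex.norm_real, Real.norm_eq_abs, abs_of_pos (by linarith)]
        linarith
      rcases hmem2 with ⟨u, huA, hu⟩
      have h1 : (h u).re = 0 := hre0 u (subset_closure huA)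
      have h2 : (h (((ρ₁ + ρ₂) / 2 : ℝ) : ℂ)).re = 0 :=
        hre0 _ (subset_closure hz₀)
      have h3 : (h u).re = ε / 2 := by
        rw [hu, Complex.add_re, h2, Complex.ofReal_re]; ring
      linarith
  -- h = w on closure A
  have hwclos : ∀ z ∈ closure A, h z = w :=
    fun z hz => Set.EqOn.of_subset_closure (fun u hu => hw u hu)
      (hh_cont.mono hclosA) continuousOn_const subset_closure subset_rfl hz
  -- inner circle points are in closure A
  have hinner : ∀ z : ℂ, z.re ^ 2 + z.im ^ 2 = ρ₁ ^ 2 → z ∈ closure A := by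
    intro z hz1
    have ht : Filter.Tendsto (fun s : ℝ => (s : ℂ) * z) (nhdsWithin 1 (Ioi 1)) (nhds z) := by
      have hcont : Continuous fun s : ℝ => (s : ℂ) * z :=
        Complex.continuous_ofReal.mul continuous_const
      have := hcont.tendsto 1
      simp only [Complex.ofReal_one, one_mul] at this
      exact this.mono_left nhdsWithin_le_nhds
    refine mem_closure_of_tendsto ht ?_
    have hmem : Ioo (1 : ℝ) (ρ₂ / ρ₁) ∈ nhdsWithin (1 : ℝ) (Ioi 1) :=
      Ioo_mem_nhdsGT_of_mem ⟨le_refl _, by rw [lt_div_iff₀ hρ₁]; linarith⟩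
    filter_upwards [hmem] with s hs
    have hre : ((s : ℂ) * z).re = s * z.re := by simp [Complex.mul_re]
    have him : ((s : ℂ) * z).im = s * z.im := by simp [Complex.mul_im]
    have hsum : (s * z.re) ^ 2 + (s * z.im) ^ 2 = s ^ 2 * ρ₁ ^ 2 := by
      have hh' : (s * z.re) ^ 2 + (s * z.im) ^ 2 = s ^ 2 * (z.re ^ 2 + z.im ^ 2) := by ring
      rw [hh', hz1]
    have hs2 : s * ρ₁ < ρ₂ := (lt_div_iff₀ hρ₁).mp hs.2
    constructor
    · rw [hre, him, hsum]
      have h1s : 1 < s ^ 2 := by nlinarith [hs.1]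
      have := mul_lt_mul_of_pos_right h1s (mul_pos hρ₁ hρ₁)
      nlinarith [this]
    · rw [hre, him, hsum]
      have hs0 : 0 < s := lt_trans one_pos hs.1
      nlinarith [hs2, mul_pos hs0 hρ₁]
  -- w.re = 0
  have hre_w : w.re = 0 := by
    have := hre0 _ (subset_closure hz₀)
    rw [hw _ hz₀] at this
    exact this
  -- circulation gives w.im = 0
  have him_w : w.im = 0 := by
    have hint : ∀ t : ℝ,
        (F (ρ₁ * Real.cos t, ρ₁ * Real.sin t)).1 * (-(ρ₁ * Real.sin t))
          + (F (ρ₁ * Real.cos t, ρ₁ * Real.sin t)).2 * (ρ₁ * Real.cos t) = -w.im := by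
      intro t
      set zt : ℂ := ((ρ₁ * Real.cos t : ℝ) : ℂ) + ((ρ₁ * Real.sin t : ℝ) : ℂ) * Complex.I
        with hzt_def
      have hztre : zt.re = ρ₁ * Real.cos t := by
        rw [hzt_def]
        simp only [Complex.add_re, Complex.ofReal_re, Complex.mul_re, Complex.I_re,
          Complex.I_im, Complex.ofReal_im]
        ring
      have hztim : zt.im = ρ₁ * Real.sin t := by
        rw [hzt_def]
        simp only [Complex.add_im, Complex.ofReal_im, Complex.mul_im, Complex.I_re,
          Complex.I_im, Complex.ofReal_re]
        ring
      have hztmem : zt ∈ closure A := by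
        apply hinner
        rw [hztre, hztim]
        nlinarith [sin_sq_add_cos_sq t]
      have heq := hwclos zt hztmem
      have him := congrArg Complex.im heq
      rw [hh_def] at him
      simp only [hg_def, phiC_apply, hztre, hztim] at him
      rw [Complex.mul_im] at him
      simp only [Complex.sub_re, Complex.sub_im, Complex.ofReal_re, Complex.ofReal_im,
        Complex.mul_re, Complex.mul_im, Complex.I_re, Complex.I_im, hztre, hztim] at him
      ring_nf at him ⊢
      linarith [him]
    have hconst : (∫ t in (0 : ℝ)..(2 * Real.pi),
        ((F (ρ₁ * Real.cos t, ρ₁ * Real.sin t)).1 * (-(ρ₁ * Real.sin t))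
          + (F (ρ₁ * Real.cos t, ρ₁ * Real.sin t)).2 * (ρ₁ * Real.cos t)))
        = ∫ _ in (0 : ℝ)..(2 * Real.pi), (-w.im) :=
      intervalIntegral.integral_congr (fun t _ => hint t)
    rw [hconst, intervalIntegral.integral_const, smul_eq_mul] at hcirc
    have hπ := Real.pi_pos
    rcases mul_eq_zero.mp hcirc with hc | hc
    · linarith
    · linarith
  have hw0 : w = 0 := Complex.ext hre_w him_w
  -- conclusion
  intro p hp1 hp2
  set zp : ℂ := ((p.1 : ℝ) : ℂ) + ((p.2 : ℝ) : ℂ) * Complex.I with hzp_def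
  have hzpre : zp.re = p.1 := by simp [hzp_def]
  have hzpim : zp.im = p.2 := by simp [hzp_def]
  have hzpA : zp ∈ A := by
    constructor
    · rw [hzpre, hzpim]; exact hp1
    · rw [hzpre, hzpim]; exact hp2
  have hhz := hw zp hzpA
  rw [hw0, hh_def] at hhz
  have hzp0 : zp ≠ 0 := by
    intro h0
    rw [h0] at hzpre hzpim
    simp at hzpre hzpim
    rw [← hzpre, ← hzpim] at hp1
    simp at hp1
    nlinarith [hp1, hρ₁]
  have hgz : g zp = 0 := by
    rcases mul_eq_zero.mp hhz with h' | h'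
    · exact absurd h' hzp0
    · exact h'
  rw [hg_def] at hgz
  simp only [hzpre, hzpim, phiC_apply] at hgz
  have h1 := congrArg Complex.re hgz
  have h2 := congrArg Complex.im hgz
  simp [Complex.sub_re, Complex.sub_im, Complex.mul_re, Complex.mul_im] at h1 h2
  rw [Prod.ext_iff]
  constructor
  · simpa using h1
  · simpa using h2
end

section
/- Let h ∈ (0,1], m ∈ ℝ, and φ smooth on [ρ₁, ρ₂] with B = φ'' + φ'/r. For every u ∈ H¹₀((ρ₁, ρ₂), ℂ), ‖d_{h,m} u‖² = h²‖(∂_r − 1/(2r))u‖² + ‖((h(m+1))/r − φ')u‖² + h‖√B u‖², where d_{h,m} = −ih(∂_r + (m+1/2)/r − φ'/h) and norms are L² on (ρ₁, ρ₂). -/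
open Real Set Complex

/-- The fibered Dirac operator d_{h,m} = −ih(∂_r + (m+1/2)/r − φ'/h). -/
noncomputable def diracD (h m : ℝ) (φ : ℝ → ℝ) (u : ℝ → ℂ) : ℝ → ℂ :=
  fun r => -Complex.I * (h : ℂ) *
    (deriv u r + (((m + 1/2) / r : ℝ) : ℂ) * u r - ((deriv φ r / h : ℝ) : ℂ) * u r)

lemma normsq_aux (z : ℂ) : ‖z‖ ^ 2 = z.re ^ 2 + z.im ^ 2 := by
  rw [Complex.sq_norm, Complex.normSq_apply]; ring

/-- L² norm identity: ‖d_{h,m} u‖² = h²‖(∂_r − 1/(2r))u‖² + ‖(h(m+1)/r − φ')u‖² + h‖√B u‖²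
for u ∈ H¹₀((ρ₁, ρ₂), ℂ), with B = φ'' + φ'/r ≥ 0. -/
theorem stmt6 (ρ₁ ρ₂ : ℝ) (hρ₁ : 0 < ρ₁) (hρ : ρ₁ < ρ₂)
    (h m : ℝ) (hh : h ∈ Set.Ioc (0:ℝ) 1)
    (φ B : ℝ → ℝ) (hφ : ContDiff ℝ (⊤ : ℕ∞) φ)
    (hB : ∀ r ∈ Set.Icc ρ₁ ρ₂, B r = deriv (deriv φ) r + deriv φ r / r)
    (hBnn : ∀ r ∈ Set.Icc ρ₁ ρ₂, 0 ≤ B r)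
    (u : ℝ → ℂ) (hu : ContDiff ℝ 1 u) (hu₁ : u ρ₁ = 0) (hu₂ : u ρ₂ = 0) :
    (∫ r in ρ₁..ρ₂, ‖diracD h m φ u r‖ ^ 2)
      = h ^ 2 * (∫ r in ρ₁..ρ₂, ‖deriv u r - ((1 / (2 * r) : ℝ) : ℂ) * u r‖ ^ 2)
        + (∫ r in ρ₁..ρ₂, ‖((h * (m + 1) / r - deriv φ r : ℝ) : ℂ) * u r‖ ^ 2)
        + h * (∫ r in ρ₁..ρ₂, ‖((Real.sqrt (B r) : ℝ) : ℂ) * u r‖ ^ 2) := by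
  obtain ⟨hh0, hh1⟩ := hh
  have hhne : h ≠ 0 := ne_of_gt hh0
  have hle : ρ₁ ≤ ρ₂ := hρ.le
  have huIcc : Set.uIcc ρ₁ ρ₂ = Set.Icc ρ₁ ρ₂ := Set.uIcc_of_le hle
  have hpos : ∀ r ∈ Set.Icc ρ₁ ρ₂, 0 < r := fun r hr => lt_of_lt_of_le hρ₁ hr.1
  -- smoothness facts
  have hφ' : ContDiff ℝ (↑(⊤ : ℕ∞)) (deriv φ) :=
    (contDiff_infty_iff_deriv.mp (hφ.of_le (by simp))).2
  have hφ'diff : Differentiable ℝ (deriv φ) := hφ'.differentiable (by simp)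
  have hφ'cont : Continuous (deriv φ) := hφ'diff.continuous
  have hφ''cont : Continuous (deriv (deriv φ)) := hφ'.continuous_deriv (by exact_mod_cast le_top)
  have hucont : Continuous u := hu.continuous
  have hu'cont : Continuous (deriv u) := hu.continuous_deriv le_rfl
  have hudiff : ∀ r, HasDerivAt u (deriv u r) r :=
    fun r => ((hu.differentiable one_ne_zero) r).hasDerivAt
  -- real and imaginary parts
  set P : ℝ → ℝ := fun r => (u r).re with hPdef
  set Q : ℝ → ℝ := fun r => (u r).im with hQdef
  have hPc : Continuous P := Complex.continuous_re.comp hucont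
  have hQc : Continuous Q := Complex.continuous_im.comp hucont
  -- the boundary function g and its derivative g'
  set g : ℝ → ℝ := fun r => ((m+1) * r⁻¹ - deriv φ r * h⁻¹) * (P r ^ 2 + Q r ^ 2) with hgdef
  set g' : ℝ → ℝ := fun r =>
      ((m+1) * (-(r^2)⁻¹) - deriv (deriv φ) r * h⁻¹) * (P r ^ 2 + Q r ^ 2)
      + ((m+1) * r⁻¹ - deriv φ r * h⁻¹) *
          (2 * P r * (deriv u r).re + 2 * Q r * (deriv u r).im) with hg'def
  have hderiv : ∀ r ∈ Set.uIcc ρ₁ ρ₂, HasDerivAt g (g' r) r := by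
    intro r hr
    rw [huIcc] at hr
    have hrne : r ≠ 0 := (hpos r hr).ne'
    have hP' : HasDerivAt P ((deriv u r).re) r :=
      Complex.reCLM.hasFDerivAt.comp_hasDerivAt r (hudiff r)
    have hQ' : HasDerivAt Q ((deriv u r).im) r :=
      Complex.imCLM.hasFDerivAt.comp_hasDerivAt r (hudiff r)
    have h1 : HasDerivAt (fun r => (m+1) * r⁻¹ - deriv φ r * h⁻¹)
        ((m+1) * (-(r^2)⁻¹) - deriv (deriv φ) r * h⁻¹) r :=
      ((hasDerivAt_inv hrne).const_mul (m+1)).sub (((hφ'diff r).hasDerivAt).mul_const h⁻¹)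
    have h2 : HasDerivAt (fun r => P r ^ 2 + Q r ^ 2)
        (2 * P r * (deriv u r).re + 2 * Q r * (deriv u r).im) r := by
      have : HasDerivAt (fun r => P r ^ 2 + Q r ^ 2) _ r := (hP'.pow 2).add (hQ'.pow 2)
      convert this using 1
      push_cast
      ring
    exact h1.mul h2
  -- continuity of g' on the interval
  have hg'cont : ContinuousOn g' (Set.uIcc ρ₁ ρ₂) := by
    rw [huIcc]
    have hne : ∀ r ∈ Set.Icc ρ₁ ρ₂, r ≠ 0 := fun r hr => (hpos r hr).ne'
    have hinv : ContinuousOn (fun r : ℝ => r⁻¹) (Set.Icc ρ₁ ρ₂) :=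
      continuousOn_id.inv₀ hne
    have hinv2 : ContinuousOn (fun r : ℝ => -(r^2)⁻¹) (Set.Icc ρ₁ ρ₂) :=
      ((continuousOn_id.pow 2).inv₀ (fun r hr => pow_ne_zero _ (hne r hr))).neg
    exact
      ((((continuousOn_const.mul hinv2).sub
        (hφ''cont.continuousOn.mul continuousOn_const)).mul
          ((hPc.continuousOn.pow 2).add (hQc.continuousOn.pow 2))).add
        (((continuousOn_const.mul hinv).sub
          (hφ'cont.continuousOn.mul continuousOn_const)).mul
            (((continuousOn_const.mul hPc.continuousOn).mul
                (Complex.continuous_re.comp hu'cont).continuousOn).add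
              ((continuousOn_const.mul hQc.continuousOn).mul
                (Complex.continuous_im.comp hu'cont).continuousOn))))
  have hFTC : (∫ r in ρ₁..ρ₂, g' r) = 0 := by
    rw [intervalIntegral.integral_eq_sub_of_hasDerivAt hderiv hg'cont.intervalIntegrable]
    simp [hgdef, hPdef, hQdef, hu₁, hu₂]
  -- the substitute for the sqrt-B integrand
  have h3 : ∀ r ∈ Set.Icc ρ₁ ρ₂,
      ‖((Real.sqrt (B r) : ℝ) : ℂ) * u r‖ ^ 2
        = (deriv (deriv φ) r + deriv φ r / r) * (P r ^ 2 + Q r ^ 2) := by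
    intro r hr
    rw [norm_mul, mul_pow, Complex.norm_real, Real.norm_eq_abs, _root_.sq_abs,
      Real.sq_sqrt (hBnn r hr), hB r hr, normsq_aux]
  -- the pointwise identity
  have key : Set.EqOn (fun r => ‖diracD h m φ u r‖ ^ 2)
      (fun r => h ^ 2 * ‖deriv u r - ((1 / (2 * r) : ℝ) : ℂ) * u r‖ ^ 2
        + ‖((h * (m + 1) / r - deriv φ r : ℝ) : ℂ) * u r‖ ^ 2
        + h * ‖((Real.sqrt (B r) : ℝ) : ℂ) * u r‖ ^ 2
        + h ^ 2 * g' r) (Set.uIcc ρ₁ ρ₂) := by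
    intro r hr
    rw [huIcc] at hr
    have hrne : r ≠ 0 := (hpos r hr).ne'
    simp only [h3 r hr, diracD, hg'def]
    simp only [normsq_aux, Complex.mul_re, Complex.mul_im, Complex.add_re, Complex.add_im,
      Complex.sub_re, Complex.sub_im, Complex.neg_re, Complex.neg_im, Complex.I_re,
      Complex.I_im, Complex.ofReal_re, Complex.ofReal_im]
    field_simp
    ring
  -- integrability of the pieces
  have hne : ∀ r ∈ Set.Icc ρ₁ ρ₂, r ≠ 0 := fun r hr => (hpos r hr).ne'
  have ie1 : IntervalIntegrable
      (fun r => ‖deriv u r - ((1 / (2 * r) : ℝ) : ℂ) * u r‖ ^ 2)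
      MeasureTheory.volume ρ₁ ρ₂ := by
    apply ContinuousOn.intervalIntegrable
    rw [huIcc]
    refine ((hu'cont.continuousOn.sub (ContinuousOn.mul ?_ hucont.continuousOn)).norm.pow 2)
    exact Complex.continuous_ofReal.comp_continuousOn
      (continuousOn_const.div (continuousOn_const.mul continuousOn_id)
        (fun r hr => mul_ne_zero two_ne_zero (hne r hr)))
  have ie2 : IntervalIntegrable
      (fun r => ‖((h * (m + 1) / r - deriv φ r : ℝ) : ℂ) * u r‖ ^ 2)
      MeasureTheory.volume ρ₁ ρ₂ := by
    apply ContinuousOn.intervalIntegrable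
    rw [huIcc]
    refine ((ContinuousOn.mul ?_ hucont.continuousOn).norm.pow 2)
    exact Complex.continuous_ofReal.comp_continuousOn
      ((continuousOn_const.div continuousOn_id hne).sub hφ'cont.continuousOn)
  have ie3'cont : ContinuousOn
      (fun r => (deriv (deriv φ) r + deriv φ r / r) * (P r ^ 2 + Q r ^ 2))
      (Set.Icc ρ₁ ρ₂) :=
    ((hφ''cont.continuousOn.add (hφ'cont.continuousOn.div continuousOn_id hne)).mul
      ((hPc.continuousOn.pow 2).add (hQc.continuousOn.pow 2)))
  have ie3 : IntervalIntegrable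
      (fun r => ‖((Real.sqrt (B r) : ℝ) : ℂ) * u r‖ ^ 2)
      MeasureTheory.volume ρ₁ ρ₂ := by
    rw [intervalIntegrable_iff_integrableOn_Ioc_of_le hle]
    have hi : IntervalIntegrable
        (fun r => (deriv (deriv φ) r + deriv φ r / r) * (P r ^ 2 + Q r ^ 2))
        MeasureTheory.volume ρ₁ ρ₂ :=
      ContinuousOn.intervalIntegrable (by rw [huIcc]; exact ie3'cont)
    rw [intervalIntegrable_iff_integrableOn_Ioc_of_le hle] at hi
    exact hi.congr_fun
      (fun r hr => ((h3 r (Set.Ioc_subset_Icc_self hr)).symm)) measurableSet_Ioc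
  have ig' : IntervalIntegrable g' MeasureTheory.volume ρ₁ ρ₂ :=
    hg'cont.intervalIntegrable
  rw [intervalIntegral.integral_congr key]
  rw [intervalIntegral.integral_add (((ie1.const_mul _).add ie2).add (ie3.const_mul _))
    (ig'.const_mul _)]
  rw [intervalIntegral.integral_add ((ie1.const_mul _).add ie2) (ie3.const_mul _)]
  rw [intervalIntegral.integral_add (ie1.const_mul _) ie2]
  rw [intervalIntegral.integral_const_mul, intervalIntegral.integral_const_mul,
    intervalIntegral.integral_const_mul, hFTC]
  ring
end

section
/- Let h ∈ (0,1], m ∈ ℝ, φ smooth on [ρ₁, ρ₂], B = φ'' + φ'/r with B ≥ B₀ > 0 on [ρ₁, ρ₂]. Then for every u ∈ H¹₀((ρ₁, ρ₂), ℂ): ‖d_{h,m} u‖ ≥ √(2hB₀) ‖u‖, where d_{h,m} = −ih(∂_r + (m+1/2)/r − φ'/h). -/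
open Real Set Complex

open scoped ContDiff

/-- Spectral gap estimate: ‖d_{h,m} u‖ ≥ √(2hB₀) ‖u‖ for u ∈ H¹₀((ρ₁, ρ₂), ℂ),
where B = φ'' + φ'/r ≥ B₀ > 0 on [ρ₁, ρ₂]. -/
theorem stmt7 (ρ₁ ρ₂ : ℝ) (hρ₁ : 0 < ρ₁) (hρ : ρ₁ < ρ₂)
    (h m B₀ : ℝ) (hh : h ∈ Set.Ioc (0:ℝ) 1) (hB₀ : 0 < B₀)
    (φ : ℝ → ℝ) (hφ : ContDiff ℝ (⊤ : ℕ∞) φ)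
    (hB : ∀ r ∈ Set.Icc ρ₁ ρ₂, B₀ ≤ deriv (deriv φ) r + deriv φ r / r)
    (u : ℝ → ℂ) (hu : ContDiff ℝ 1 u) (hu₁ : u ρ₁ = 0) (hu₂ : u ρ₂ = 0) :
    Real.sqrt (∫ r in ρ₁..ρ₂, ‖diracD h m φ u r‖ ^ 2)
      ≥ Real.sqrt (2 * h * B₀) * Real.sqrt (∫ r in ρ₁..ρ₂, ‖u r‖ ^ 2) := by
  obtain ⟨hh0, hh1⟩ := hh
  have hhne : h ≠ 0 := ne_of_gt hh0
  have hle : ρ₁ ≤ ρ₂ := le_of_lt hρ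
  -- smoothness facts
  have hud : Differentiable ℝ u := hu.differentiable one_ne_zero
  have hu' : Continuous (deriv u) := hu.continuous_deriv le_rfl
  have hφ' : ContDiff ℝ ∞ (deriv φ) := (contDiff_infty_iff_deriv.mp (hφ.of_le (by simp))).2
  have hφ'd : Differentiable ℝ (deriv φ) := hφ'.differentiable (by simp)
  have hφ'c : Continuous (deriv φ) := hφ'.continuous
  have hφ'' : Continuous (deriv (deriv φ)) :=
    ((contDiff_infty_iff_deriv.mp hφ').2).continuous
  set V : ℝ → ℝ := fun r => (m+1)/r - deriv φ r / h with hVdef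
  set V' : ℝ → ℝ := fun r => -((m+1)/r^2) - deriv (deriv φ) r / h with hV'def
  set g : ℝ → ℝ := fun r => ‖u r‖^2 with hgdef
  set g' : ℝ → ℝ := fun r => 2*((u r).re * (deriv u r).re + (u r).im * (deriv u r).im)
    with hg'def
  -- derivative of g
  have hgd : ∀ r, HasDerivAt g (g' r) r := by
    intro r
    have hd : HasDerivAt u (deriv u r) r := (hud r).hasDerivAt
    have hre : HasDerivAt (fun x => (u x).re) ((deriv u r).re) r :=
      (Complex.reCLM.hasFDerivAt.comp_hasDerivAt r hd)
    have him : HasDerivAt (fun x => (u x).im) ((deriv u r).im) r :=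
      (Complex.imCLM.hasFDerivAt.comp_hasDerivAt r hd)
    have h2 := (hre.mul hre).add (him.mul him)
    have heq : g = fun x => (u x).re * (u x).re + (u x).im * (u x).im := by
      funext x
      show ‖u x‖^2 = _
      rw [Complex.sq_norm, Complex.normSq_apply]
    rw [heq]
    exact h2.congr_deriv (by rw [hg'def]; ring)
  -- derivative of V
  have hVd : ∀ r : ℝ, r ≠ 0 → HasDerivAt V (V' r) r := by
    intro r hr
    have h1 : HasDerivAt (fun x : ℝ => (m+1)/x) (-((m+1)/r^2)) r := by
      have h0 := (hasDerivAt_inv hr).const_mul (m+1)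
      simp only [div_eq_mul_inv]
      exact h0.congr_deriv (by ring)
    have h2 : HasDerivAt (fun x => deriv φ x / h) (deriv (deriv φ) r / h) r :=
      ((hφ'd r).hasDerivAt).div_const h
    exact h1.sub h2
  -- continuity of g, g'
  have hgc : Continuous g := by
    rw [hgdef]; exact (hu.continuous.norm.pow 2)
  have hg'c : Continuous g' := by
    rw [hg'def]
    exact continuous_const.mul
      (((Complex.continuous_re.comp hu.continuous).mul
        (Complex.continuous_re.comp hu')).add
       ((Complex.continuous_im.comp hu.continuous).mul
        (Complex.continuous_im.comp hu')))
  have hIcc : Set.uIcc ρ₁ ρ₂ = Set.Icc ρ₁ ρ₂ := Set.uIcc_of_le hle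
  have hrne : ∀ r ∈ Set.Icc ρ₁ ρ₂, r ≠ 0 := fun r hr =>
    ne_of_gt (lt_of_lt_of_le hρ₁ hr.1)
  -- continuity on the interval of V, V'
  have hVc : ContinuousOn V (Set.Icc ρ₁ ρ₂) := by
    apply ContinuousOn.sub
    · exact ContinuousOn.div continuousOn_const continuousOn_id (fun r hr => hrne r hr)
    · exact (hφ'c.continuousOn).div_const h
  have hV'c : ContinuousOn V' (Set.Icc ρ₁ ρ₂) := by
    apply ContinuousOn.sub
    · apply ContinuousOn.neg
      apply ContinuousOn.div continuousOn_const (continuousOn_pow 2)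
      intro r hr; exact pow_ne_zero 2 (hrne r hr)
    · exact (hφ''.continuousOn).div_const h
  -- FTC: integral of (2h²·(V g))' is zero
  have hFTC : (∫ r in ρ₁..ρ₂, 2*h^2*(V' r * g r + V r * g' r)) = 0 := by
    have hderiv : ∀ r ∈ Set.uIcc ρ₁ ρ₂,
        HasDerivAt (fun x => 2*h^2*(V x * g x)) (2*h^2*(V' r * g r + V r * g' r)) r := by
      intro r hr
      rw [hIcc] at hr
      exact ((hVd r (hrne r hr)).mul (hgd r)).const_mul (2*h^2)
    have hint : IntervalIntegrable (fun r => 2*h^2*(V' r * g r + V r * g' r))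
        MeasureTheory.volume ρ₁ ρ₂ := by
      apply ContinuousOn.intervalIntegrable
      rw [hIcc]
      exact (continuousOn_const.mul ((hV'c.mul hgc.continuousOn).add
        (hVc.mul hg'c.continuousOn)))
    rw [intervalIntegral.integral_eq_sub_of_hasDerivAt hderiv hint]
    rw [hgdef]
    simp [hu₁, hu₂]
  -- pointwise bound
  have hpt : ∀ r ∈ Set.Icc ρ₁ ρ₂,
      2*h^2*(V' r * g r + V r * g' r) + 2*h*(deriv (deriv φ) r + deriv φ r / r) * g r
        ≤ ‖diracD h m φ u r‖^2 := by
    intro r hr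
    have hr0 : r ≠ 0 := hrne r hr
    set a := (u r).re
    set b := (u r).im
    set a' := (deriv u r).re
    set b' := (deriv u r).im
    set w := deriv φ r
    set w' := deriv (deriv φ) r
    set c : ℝ := (m + 1/2)/r - w/h with hcdef
    -- norm identity
    have hnorm : ‖diracD h m φ u r‖^2 = h^2 * ((a' + c*a)^2 + (b' + c*b)^2) := by
      rw [diracD]
      have hz : deriv u r + (((m + 1/2) / r : ℝ) : ℂ) * u r - ((w / h : ℝ) : ℂ) * u r
          = deriv u r + (c : ℂ) * u r := by
        rw [hcdef]; push_cast; ring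
      show ‖-Complex.I * (h:ℂ) * (deriv u r + (((m + 1/2) / r : ℝ) : ℂ) * u r - ((w / h : ℝ) : ℂ) * u r)‖^2 = _
      rw [hz]
      rw [norm_mul, norm_mul]
      have : ‖deriv u r + (c : ℂ) * u r‖^2 = (a' + c*a)^2 + (b' + c*b)^2 := by
        rw [Complex.sq_norm, Complex.normSq_apply]
        simp [a, b, a', b']
        ring
      have hI : ‖-Complex.I‖ = 1 := by simp
      have hhn : ‖(h:ℂ)‖ = h := by
        rw [Complex.norm_real]; exact abs_of_pos hh0
      rw [hI, hhn, one_mul, mul_pow, this]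
    rw [hnorm]
    -- identity: B = h(-V' - V/r)
    have hBid : w' + w/r = h * (-(V' r) - V r / r) := by
      rw [hVdef, hV'def]
      field_simp
      ring
    have hcV : c = V r - 1/(2*r) := by
      rw [hcdef, hVdef]
      field_simp
      ring
    have hgr : g r = a^2 + b^2 := by
      show ‖u r‖^2 = _
      rw [Complex.sq_norm, Complex.normSq_apply]; ring
    have hg'r : g' r = 2*(a*a' + b*b') := by show 2*(a*a'+b*b') = _; rfl
    rw [hBid, hgr, hg'r, hcV]
    have hh2 : (0:ℝ) < h^2 := by positivity
    have halg : 2*(V' r * (a^2+b^2) + V r * (2*(a*a'+b*b')))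
        + 2*(-(V' r) - V r / r)*(a^2+b^2)
        ≤ (a' + (V r - 1/(2*r))*a)^2 + (b' + (V r - 1/(2*r))*b)^2 := by
      set t := 1/(2*r) with htdef
      have h1r : V r / r = 2*t*(V r) := by rw [htdef]; field_simp
      rw [h1r]
      nlinarith [sq_nonneg (a' - t*a - V r * a), sq_nonneg (b' - t*b - V r * b)]
    calc 2*h^2*(V' r * (a^2+b^2) + V r * (2*(a*a'+b*b')))
          + 2*h*(h*(-(V' r) - V r / r)) * (a^2+b^2)
        = h^2 * (2*(V' r * (a^2+b^2) + V r * (2*(a*a'+b*b')))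
          + 2*(-(V' r) - V r / r)*(a^2+b^2)) := by ring
      _ ≤ h^2 * ((a' + (V r - 1/(2*r))*a)^2 + (b' + (V r - 1/(2*r))*b)^2) :=
          mul_le_mul_of_nonneg_left halg (le_of_lt hh2)
  -- integrability
  have hf1int : IntervalIntegrable (fun r => ‖diracD h m φ u r‖^2)
      MeasureTheory.volume ρ₁ ρ₂ := by
    apply ContinuousOn.intervalIntegrable
    rw [hIcc]
    have hcd : ContinuousOn (fun r => diracD h m φ u r) (Set.Icc ρ₁ ρ₂) := by
      unfold diracD
      apply ContinuousOn.mul continuousOn_const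
      apply ContinuousOn.sub
      · apply ContinuousOn.add (hu'.continuousOn)
        apply ContinuousOn.mul
        · apply Continuous.comp_continuousOn Complex.continuous_ofReal
          exact ContinuousOn.div continuousOn_const continuousOn_id
            (fun r hr => hrne r hr)
        · exact hu.continuous.continuousOn
      · apply ContinuousOn.mul
        · apply Continuous.comp_continuousOn Complex.continuous_ofReal
          exact (hφ'c.continuousOn).div_const h
        · exact hu.continuous.continuousOn
    exact (hcd.norm.pow 2)
  have hf2int : IntervalIntegrable (fun r => 2*h^2*(V' r * g r + V r * g' r))
      MeasureTheory.volume ρ₁ ρ₂ := by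
    apply ContinuousOn.intervalIntegrable
    rw [hIcc]
    exact (continuousOn_const.mul ((hV'c.mul hgc.continuousOn).add
      (hVc.mul hg'c.continuousOn)))
  have hf3int : IntervalIntegrable
      (fun r => 2*h*(deriv (deriv φ) r + deriv φ r / r) * g r)
      MeasureTheory.volume ρ₁ ρ₂ := by
    apply ContinuousOn.intervalIntegrable
    rw [hIcc]
    apply ContinuousOn.mul _ hgc.continuousOn
    apply ContinuousOn.mul continuousOn_const
    exact hφ''.continuousOn.add (ContinuousOn.div hφ'c.continuousOn
      continuousOn_id (fun r hr => hrne r hr))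
  have hgint : IntervalIntegrable g MeasureTheory.volume ρ₁ ρ₂ :=
    hgc.intervalIntegrable ρ₁ ρ₂
  -- main integral inequality
  have step1 : (∫ r in ρ₁..ρ₂, (2*h^2*(V' r * g r + V r * g' r)
      + 2*h*(deriv (deriv φ) r + deriv φ r / r) * g r))
      ≤ ∫ r in ρ₁..ρ₂, ‖diracD h m φ u r‖^2 := by
    apply intervalIntegral.integral_mono_on hle (hf2int.add hf3int) hf1int
    intro x hx
    exact hpt x hx
  rw [intervalIntegral.integral_add hf2int hf3int, hFTC, zero_add] at step1
  have step2 : (∫ r in ρ₁..ρ₂, 2*h*B₀ * g r)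
      ≤ ∫ r in ρ₁..ρ₂, 2*h*(deriv (deriv φ) r + deriv φ r / r) * g r := by
    apply intervalIntegral.integral_mono_on hle
      ((hgint.const_mul (2*h*B₀))) hf3int
    intro x hx
    have hg0 : 0 ≤ g x := by rw [hgdef]; positivity
    have h1 := hB x hx
    have h2 := mul_le_mul_of_nonneg_left (mul_le_mul_of_nonneg_right h1 hg0)
      (by positivity : (0:ℝ) ≤ 2*h)
    linarith
  rw [intervalIntegral.integral_const_mul] at step2
  have hgnn : 0 ≤ ∫ r in ρ₁..ρ₂, g r := by
    apply intervalIntegral.integral_nonneg hle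
    intro x hx
    rw [hgdef]; positivity
  have main : 2*h*B₀ * (∫ r in ρ₁..ρ₂, g r) ≤ ∫ r in ρ₁..ρ₂, ‖diracD h m φ u r‖^2 :=
    le_trans step2 step1
  rw [ge_iff_le, ← Real.sqrt_mul (by positivity : (0:ℝ) ≤ 2*h*B₀)]
  exact Real.sqrt_le_sqrt main
end

section
/- Let h ∈ (0,1], m ∈ ℝ, φ smooth on [ρ₁, ρ₂], B = φ'' + φ'/r ≥ B₀ > 0. For every u ∈ H¹₀ ∩ H²((ρ₁, ρ₂), ℂ): ‖d_{h,m}^× d_{h,m} u‖ ≥ 2hB₀‖u‖ and ‖d_{h,m}^× d_{h,m} u‖ ≥ √(2hB₀) ‖d_{h,m} u‖. -/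
open Real Set Complex
open scoped ContDiff
set_option maxHeartbeats 1000000

private lemma nsq_expand (z : ℂ) : ‖z‖^2 = z.re*z.re + z.im*z.im := by
  rw [← Complex.normSq_apply, ← Complex.sq_norm]

private lemma aux_dx (h : ℝ) (X Y G G' : ℂ) :
    -Complex.I * h * ((-Complex.I * h * G') - X * (-Complex.I * h * G) + Y * (-Complex.I * h * G))
      = -((h:ℂ)^2) * (G' - (X - Y) * G) := by
  linear_combination ((h:ℂ)^2 * (G' - (X - Y) * G)) * Complex.I_sq

private lemma pt1 (r h m A A' : ℝ) (p q : ℂ) (hr : r ≠ 0) (hh : h ≠ 0) :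
    ‖p + (((m+1/2)/r - A/h : ℝ):ℂ) * q‖^2
      - (‖p + ((-((m+1/2+1)/r) + A/h : ℝ):ℂ) * q‖^2 + (2/h)*(A' + A/r)*‖q‖^2)
    = ((-((m+1/2)/r^2) - A'/h) - ((m+1/2+1)/r^2 + A'/h)) * ‖q‖^2
      + (((m+1/2)/r - A/h) - (-((m+1/2+1)/r) + A/h)) * (2 * ((starRingEnd ℂ) q * p).re) := by
  simp only [nsq_expand, Complex.add_re, Complex.add_im, Complex.mul_re, Complex.mul_im,
    Complex.ofReal_re, Complex.ofReal_im, Complex.conj_re, Complex.conj_im]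
  field_simp
  ring

/-- Its formal adjoint d_{h,m}^× = −ih(∂_r − (m+1/2)/r + φ'/h). -/
noncomputable def diracDx (h m : ℝ) (φ : ℝ → ℝ) (u : ℝ → ℂ) : ℝ → ℂ :=
  fun r => -Complex.I * (h : ℂ) *
    (deriv u r - (((m + 1/2) / r : ℝ) : ℂ) * u r + ((deriv φ r / h : ℝ) : ℂ) * u r)

/-- For u ∈ H¹₀ ∩ H²: ‖d^× d u‖ ≥ 2hB₀‖u‖ and ‖d^× d u‖ ≥ √(2hB₀)‖d u‖,
where B = φ'' + φ'/r ≥ B₀ > 0. -/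
theorem stmt8 (ρ₁ ρ₂ : ℝ) (hρ₁ : 0 < ρ₁) (hρ : ρ₁ < ρ₂)
    (h m B₀ : ℝ) (hh : h ∈ Set.Ioc (0:ℝ) 1) (hB₀ : 0 < B₀)
    (φ : ℝ → ℝ) (hφ : ContDiff ℝ (⊤ : ℕ∞) φ)
    (hB : ∀ r ∈ Set.Icc ρ₁ ρ₂, B₀ ≤ deriv (deriv φ) r + deriv φ r / r)
    (u : ℝ → ℂ) (hu : ContDiff ℝ 2 u) (hu₁ : u ρ₁ = 0) (hu₂ : u ρ₂ = 0) :
    Real.sqrt (∫ r in ρ₁..ρ₂, ‖diracDx h m φ (diracD h m φ u) r‖ ^ 2)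
      ≥ 2 * h * B₀ * Real.sqrt (∫ r in ρ₁..ρ₂, ‖u r‖ ^ 2) ∧
    Real.sqrt (∫ r in ρ₁..ρ₂, ‖diracDx h m φ (diracD h m φ u) r‖ ^ 2)
      ≥ Real.sqrt (2 * h * B₀) * Real.sqrt (∫ r in ρ₁..ρ₂, ‖diracD h m φ u r‖ ^ 2) := by
  obtain ⟨hh0, _hh1⟩ := hh
  have hne : h ≠ 0 := ne_of_gt hh0
  have hρle : ρ₁ ≤ ρ₂ := le_of_lt hρ
  have hIcc : Set.uIcc ρ₁ ρ₂ = Set.Icc ρ₁ ρ₂ := Set.uIcc_of_le hρle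
  have hpos : ∀ r ∈ Set.Icc ρ₁ ρ₂, r ≠ 0 := fun r hr => ne_of_gt (lt_of_lt_of_le hρ₁ hr.1)
  -- regularity
  have hφi : ContDiff ℝ ∞ φ := hφ.of_le (by simp)
  have hφ1 : ContDiff ℝ ∞ (deriv φ) := (contDiff_infty_iff_deriv.mp hφi).2
  have hAd : Differentiable ℝ (deriv φ) := hφ1.differentiable (by simp)
  have hAc : Continuous (deriv φ) := hAd.continuous
  have hA'c : Continuous (deriv (deriv φ)) := ((contDiff_infty_iff_deriv.mp hφ1).2).continuous
  have hu2 : ContDiff ℝ ((1:ℕ) + 1) u := by exact_mod_cast hu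
  have hu'1 : ContDiff ℝ 1 (deriv u) := (contDiff_succ_iff_deriv.mp hu2).2.2
  have hud : Differentiable ℝ u := hu2.differentiable (by norm_num)
  have hu'd : Differentiable ℝ (deriv u) := hu'1.differentiable one_ne_zero
  have hu''c : Continuous (deriv (deriv u)) := (contDiff_one_iff_deriv.mp hu'1).2
  have huC : Continuous u := hud.continuous
  have hu'C : Continuous (deriv u) := hu'd.continuous
  -- the basic functions
  set a  : ℝ → ℝ := fun r => (m + 1/2) / r - deriv φ r / h with ha_def
  set a' : ℝ → ℝ := fun r => -((m + 1/2) / r^2) - deriv (deriv φ) r / h with ha'_def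
  set c  : ℝ → ℝ := fun r => -((m + 1/2 + 1) / r) + deriv φ r / h with hc_def
  set c' : ℝ → ℝ := fun r => (m + 1/2 + 1) / r^2 + deriv (deriv φ) r / h with hc'_def
  set g  : ℝ → ℂ := fun r => deriv u r + ((a r : ℝ) : ℂ) * u r with hg_def
  set g' : ℝ → ℂ := fun r =>
    deriv (deriv u) r + ((a' r : ℝ) : ℂ) * u r + ((a r : ℝ) : ℂ) * deriv u r with hg'_def
  -- derivatives
  have haD : ∀ r : ℝ, r ≠ 0 → HasDerivAt a (a' r) r := by
    intro r hr
    have h1 : HasDerivAt (fun s : ℝ => (m + 1/2) / s) (-((m + 1/2) / r^2)) r := by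
      have := (hasDerivAt_inv hr).const_mul (m + 1/2)
      simpa [div_eq_mul_inv, neg_div, mul_neg] using this
    exact h1.sub ((hAd r).hasDerivAt.div_const h)
  have hcD : ∀ r : ℝ, r ≠ 0 → HasDerivAt c (c' r) r := by
    intro r hr
    have h1 : HasDerivAt (fun s : ℝ => -((m + 1/2 + 1) / s)) ((m + 1/2 + 1) / r^2) r := by
      have := ((hasDerivAt_inv hr).const_mul (m + 1/2 + 1)).neg
      simpa [div_eq_mul_inv, neg_div, mul_neg, Pi.neg_def] using this
    exact h1.add ((hAd r).hasDerivAt.div_const h)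
  have hgD : ∀ r : ℝ, r ≠ 0 → HasDerivAt g (g' r) r := by
    intro r hr
    have h2 := (((haD r hr).ofReal_comp).mul (hud r).hasDerivAt)
    have h3 := ((hu'd r).hasDerivAt.add h2)
    simpa [hg_def, hg'_def, add_assoc, Pi.add_def, Pi.mul_def] using h3
  -- rewriting the operators
  have hDeq : ∀ r : ℝ, diracD h m φ u r = -Complex.I * (h:ℂ) * g r := by
    intro r
    simp only [diracD, hg_def, ha_def]
    push_cast
    ring
  have hDfun : diracD h m φ u = fun r => -Complex.I * (h:ℂ) * g r := funext hDeq
  have hDxeq : ∀ r : ℝ, r ≠ 0 →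
      diracDx h m φ (diracD h m φ u) r = -((h:ℂ)^2) * (g' r - ((a r : ℝ) : ℂ) * g r) := by
    intro r hr
    have hD' : deriv (diracD h m φ u) r = -Complex.I * (h:ℂ) * g' r := by
      rw [hDfun]
      exact ((hgD r hr).const_mul (-Complex.I * (h:ℂ))).deriv
    have hsplit : ((a r : ℝ) : ℂ)
        = (((m + 1/2) / r : ℝ) : ℂ) - ((deriv φ r / h : ℝ) : ℂ) := by
      rw [ha_def]; push_cast; ring
    simp only [diracDx]
    rw [hD', hDeq r, hsplit]
    exact aux_dx h _ _ (g r) (g' r)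
  -- continuity
  have hinvC : ContinuousOn (fun r : ℝ => r⁻¹) (Set.Icc ρ₁ ρ₂) :=
    ContinuousOn.inv₀ continuousOn_id hpos
  have haC : ContinuousOn a (Set.Icc ρ₁ ρ₂) := by
    rw [ha_def]
    exact (continuousOn_const.div continuousOn_id hpos).sub (hAc.continuousOn.div_const h)
  have ha'C : ContinuousOn a' (Set.Icc ρ₁ ρ₂) := by
    rw [ha'_def]
    exact ((continuousOn_const.div (continuousOn_id.pow 2)
      (fun r hr => pow_ne_zero 2 (hpos r hr))).neg).sub (hA'c.continuousOn.div_const h)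
  have hcC : ContinuousOn c (Set.Icc ρ₁ ρ₂) := by
    rw [hc_def]
    exact ((continuousOn_const.div continuousOn_id hpos).neg).add (hAc.continuousOn.div_const h)
  have hc'C : ContinuousOn c' (Set.Icc ρ₁ ρ₂) := by
    rw [hc'_def]
    exact (continuousOn_const.div (continuousOn_id.pow 2)
      (fun r hr => pow_ne_zero 2 (hpos r hr))).add (hA'c.continuousOn.div_const h)
  have hgC : ContinuousOn g (Set.Icc ρ₁ ρ₂) := by
    rw [hg_def]
    exact hu'C.continuousOn.add
      ((Complex.continuous_ofReal.comp_continuousOn haC).mul huC.continuousOn)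
  have hg'C : ContinuousOn g' (Set.Icc ρ₁ ρ₂) := by
    rw [hg'_def]
    exact (hu''c.continuousOn.add
      ((Complex.continuous_ofReal.comp_continuousOn ha'C).mul huC.continuousOn)).add
      ((Complex.continuous_ofReal.comp_continuousOn haC).mul hu'C.continuousOn)
  -- integrability helpers
  have hII : ∀ {f : ℝ → ℝ}, ContinuousOn f (Set.Icc ρ₁ ρ₂) →
      IntervalIntegrable f MeasureTheory.volume ρ₁ ρ₂ := by
    intro f hf
    exact (hIcc ▸ hf : ContinuousOn f (Set.uIcc ρ₁ ρ₂)).intervalIntegrable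
  have hIIC : ∀ {f : ℝ → ℂ}, ContinuousOn f (Set.Icc ρ₁ ρ₂) →
      IntervalIntegrable f MeasureTheory.volume ρ₁ ρ₂ := by
    intro f hf
    exact (hIcc ▸ hf : ContinuousOn f (Set.uIcc ρ₁ ρ₂)).intervalIntegrable
  -- the |u|^2 function and its derivative
  set n : ℝ → ℝ := fun r => ‖u r‖^2 with hn_def
  set n' : ℝ → ℝ := fun r => 2 * ((starRingEnd ℂ) (u r) * deriv u r).re with hn'_def
  have hnD : ∀ r : ℝ, HasDerivAt n (n' r) r := by
    intro r
    have := (hud r).hasDerivAt.norm_sq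
    rw [hn_def, hn'_def]
    simpa [Complex.inner, mul_comm] using this
  have hnC : Continuous n := by rw [hn_def]; continuity
  have hn'C : Continuous n' := by
    rw [hn'_def]
    exact continuous_const.mul (Complex.continuous_re.comp
      (((continuous_conj.comp huC)).mul hu'C))
  -- first pointwise identity and FTC
  set S : ℝ → ℝ := fun r => ‖deriv u r + ((c r : ℝ) : ℂ) * u r‖^2 with hS_def
  set T : ℝ → ℝ := fun r => (2/h) * (deriv (deriv φ) r + deriv φ r / r) * n r with hT_def
  set F1' : ℝ → ℝ := fun r => (a' r - c' r) * n r + (a r - c r) * n' r with hF1'_def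
  have hF1D : ∀ r ∈ Set.uIcc ρ₁ ρ₂, HasDerivAt (fun s => (a s - c s) * n s) (F1' r) r := by
    intro r hr
    rw [hIcc] at hr
    exact ((haD r (hpos r hr)).sub (hcD r (hpos r hr))).mul (hnD r)
  have hF1'C : ContinuousOn F1' (Set.Icc ρ₁ ρ₂) := by
    rw [hF1'_def]
    exact ((ha'C.sub hc'C).mul hnC.continuousOn).add ((haC.sub hcC).mul hn'C.continuousOn)
  have hFTC1 : (∫ r in ρ₁..ρ₂, F1' r) = 0 := by
    rw [intervalIntegral.integral_eq_sub_of_hasDerivAt hF1D (hII hF1'C)]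
    rw [hn_def]
    simp [hu₁, hu₂]
  have hpt1 : ∀ r ∈ Set.Icc ρ₁ ρ₂, ‖g r‖^2 - (S r + T r) = F1' r := by
    intro r hr
    have hr0 : r ≠ 0 := hpos r hr
    have := pt1 r h m (deriv φ r) (deriv (deriv φ) r) (deriv u r) (u r) hr0 hne
    simp only [hg_def, hS_def, hT_def, hF1'_def, hn_def, hn'_def, ha_def, ha'_def, hc_def,
      hc'_def]
    exact this
  -- integral consequences
  have hSC : ContinuousOn S (Set.Icc ρ₁ ρ₂) := by
    rw [hS_def]
    exact (ContinuousOn.norm (hu'C.continuousOn.add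
      ((Complex.continuous_ofReal.comp_continuousOn hcC).mul huC.continuousOn))).pow 2
  have hTC : ContinuousOn T (Set.Icc ρ₁ ρ₂) := by
    rw [hT_def]
    exact (continuousOn_const.mul (hA'c.continuousOn.add
      (hAc.continuousOn.div continuousOn_id hpos))).mul hnC.continuousOn
  have hg2C : ContinuousOn (fun r => ‖g r‖^2) (Set.Icc ρ₁ ρ₂) := (ContinuousOn.norm hgC).pow 2
  have hIg_eq : (∫ r in ρ₁..ρ₂, ‖g r‖^2)
      = (∫ r in ρ₁..ρ₂, S r) + ∫ r in ρ₁..ρ₂, T r := by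
    have h0 : (∫ r in ρ₁..ρ₂, (‖g r‖^2 - (S r + T r))) = 0 := by
      rw [intervalIntegral.integral_congr (g := F1') (fun r hr => hpt1 r (hIcc ▸ hr))]
      exact hFTC1
    rw [intervalIntegral.integral_sub (hII hg2C) (hII (f := fun r => S r + T r) (hSC.add hTC))] at h0
    rw [intervalIntegral.integral_add (hII hSC) (hII hTC)] at h0
    linarith
  have hSnn : 0 ≤ ∫ r in ρ₁..ρ₂, S r := by
    apply intervalIntegral.integral_nonneg hρle
    intro r _
    rw [hS_def]
    positivity
  have hTlb : 2*B₀/h * (∫ r in ρ₁..ρ₂, n r) ≤ ∫ r in ρ₁..ρ₂, T r := by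
    rw [← intervalIntegral.integral_const_mul]
    apply intervalIntegral.integral_mono_on hρle
      (IntervalIntegrable.const_mul (hII hnC.continuousOn) _) (hII hTC)
    intro r hr
    simp only [hT_def, hn_def]
    have h1 := hB r hr
    have h2 : (0:ℝ) ≤ ‖u r‖^2 := by positivity
    have h3 : (0:ℝ) ≤ 2/h := by positivity
    have h4 := mul_le_mul_of_nonneg_left (mul_le_mul_of_nonneg_right h1 h2) h3
    have e1 : 2*B₀/h * ‖u r‖^2 = 2/h*(B₀*‖u r‖^2) := by ring
    have e2 : 2/h * (deriv (deriv φ) r + deriv φ r / r) * ‖u r‖^2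
        = 2/h*((deriv (deriv φ) r + deriv φ r / r)*‖u r‖^2) := by ring
    rw [e1, e2]
    exact h4
  have hIglb : 2*B₀/h * (∫ r in ρ₁..ρ₂, n r) ≤ ∫ r in ρ₁..ρ₂, ‖g r‖^2 := by
    rw [hIg_eq]; linarith
  -- relation between N2 and Ig
  have hN2 : (∫ r in ρ₁..ρ₂, ‖diracD h m φ u r‖^2) = h^2 * ∫ r in ρ₁..ρ₂, ‖g r‖^2 := by
    rw [← intervalIntegral.integral_const_mul]
    apply intervalIntegral.integral_congr
    intro r _
    show ‖diracD h m φ u r‖^2 = h^2 * ‖g r‖^2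
    rw [hDeq r]
    simp [norm_mul, Real.norm_eq_abs, abs_of_pos hh0]
    ring
  -- FTC2 (integration by parts)
  set F2' : ℝ → ℂ := fun r =>
    g' r * (starRingEnd ℂ) (u r) + g r * (starRingEnd ℂ) (deriv u r) with hF2'_def
  have hF2D : ∀ r ∈ Set.uIcc ρ₁ ρ₂,
      HasDerivAt (fun s => g s * (starRingEnd ℂ) (u s)) (F2' r) r := by
    intro r hr
    rw [hIcc] at hr
    have h1 := (hgD r (hpos r hr)).mul ((hud r).hasDerivAt.star)
    rw [hF2'_def]
    simpa [Complex.star_def, Pi.mul_def] using h1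
  have hconjuC : Continuous fun s : ℝ => (starRingEnd ℂ) (u s) := continuous_conj.comp huC
  have hconju'C : Continuous fun s : ℝ => (starRingEnd ℂ) (deriv u s) :=
    continuous_conj.comp hu'C
  have hF2'C : ContinuousOn F2' (Set.Icc ρ₁ ρ₂) := by
    rw [hF2'_def]
    exact (hg'C.mul hconjuC.continuousOn).add (hgC.mul hconju'C.continuousOn)
  have hFTC2 : (∫ r in ρ₁..ρ₂, F2' r) = 0 := by
    rw [intervalIntegral.integral_eq_sub_of_hasDerivAt hF2D (hIIC hF2'C)]
    simp [hu₁, hu₂]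
  -- the adjoint applied, as a nice function
  set Fx : ℝ → ℂ := fun r => -((h:ℂ)^2) * (g' r - ((a r : ℝ) : ℂ) * g r) with hFx_def
  have hFxC : ContinuousOn Fx (Set.Icc ρ₁ ρ₂) := by
    rw [hFx_def]
    exact continuousOn_const.mul
      (hg'C.sub ((Complex.continuous_ofReal.comp_continuousOn haC).mul hgC))
  -- pointwise identity 2
  have hpt2 : ∀ r ∈ Set.Icc ρ₁ ρ₂,
      Fx r * (starRingEnd ℂ) (u r)
        = -((h:ℂ)^2) * F2' r + ((h:ℂ)^2) * ((‖g r‖^2 : ℝ) : ℂ) := by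
    intro r _
    have hconj : (starRingEnd ℂ) (g r)
        = (starRingEnd ℂ) (deriv u r) + ((a r : ℝ):ℂ) * (starRingEnd ℂ) (u r) := by
      rw [hg_def]
      simp [map_add, map_mul, Complex.conj_ofReal]
    have hgg : ((‖g r‖^2 : ℝ) : ℂ) = g r * (starRingEnd ℂ) (g r) := by
      rw [Complex.mul_conj]
      norm_cast
      rw [← Complex.sq_norm]
    rw [hFx_def, hF2'_def, hgg, hconj]
    ring
  -- integral identity 2
  have hg2CC : ContinuousOn (fun r => ((‖g r‖^2 : ℝ) : ℂ)) (Set.Icc ρ₁ ρ₂) :=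
    Complex.continuous_ofReal.comp_continuousOn hg2C
  have hI2 : (∫ r in ρ₁..ρ₂, Fx r * (starRingEnd ℂ) (u r))
      = (((h^2 * ∫ r in ρ₁..ρ₂, ‖g r‖^2 : ℝ)) : ℂ) := by
    rw [intervalIntegral.integral_congr (g := fun r =>
      -((h:ℂ)^2) * F2' r + ((h:ℂ)^2) * ((‖g r‖^2 : ℝ) : ℂ))
      (fun r hr => hpt2 r (hIcc ▸ hr))]
    rw [intervalIntegral.integral_add ((hIIC hF2'C).const_mul _) ((hIIC hg2CC).const_mul _)]
    rw [intervalIntegral.integral_const_mul, intervalIntegral.integral_const_mul, hFTC2]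
    rw [intervalIntegral.integral_ofReal]
    push_cast
    ring
  -- name the main quantities
  set Ig := ∫ r in ρ₁..ρ₂, ‖g r‖^2 with hIg_def
  set M2 := ∫ r in ρ₁..ρ₂, n r with hM2_def
  set X := ∫ r in ρ₁..ρ₂, ‖Fx r‖ * ‖u r‖ with hX_def
  set Dp := ∫ r in ρ₁..ρ₂, ‖Fx r‖^2 with hDp_def
  have hM2nn : 0 ≤ M2 := by
    rw [hM2_def]
    exact intervalIntegral.integral_nonneg hρle (fun r _ => by rw [hn_def]; positivity)
  have hIgnn : 0 ≤ Ig := by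
    rw [hIg_def]
    exact intervalIntegral.integral_nonneg hρle (fun r _ => by positivity)
  have hXnn : 0 ≤ X := by
    rw [hX_def]
    exact intervalIntegral.integral_nonneg hρle (fun r _ => by positivity)
  have hDpnn : 0 ≤ Dp := by
    rw [hDp_def]
    exact intervalIntegral.integral_nonneg hρle (fun r _ => by positivity)
  have hFxnC : ContinuousOn (fun r => ‖Fx r‖) (Set.Icc ρ₁ ρ₂) := hFxC.norm
  have hFx2C : ContinuousOn (fun r => ‖Fx r‖^2) (Set.Icc ρ₁ ρ₂) := hFxnC.pow 2
  have hFxuC : ContinuousOn (fun r => ‖Fx r‖ * ‖u r‖) (Set.Icc ρ₁ ρ₂) :=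
    hFxnC.mul huC.norm.continuousOn
  -- ∫ |du|² = h² Ig  ≤ X  (by the IBP identity)
  have hNX : h^2 * Ig ≤ X := by
    have h1 : h^2 * Ig = ‖((h^2 * Ig : ℝ) : ℂ)‖ := by
      rw [Complex.norm_real]
      exact (Real.norm_of_nonneg (by positivity)).symm
    rw [h1, ← hI2]
    calc ‖∫ r in ρ₁..ρ₂, Fx r * (starRingEnd ℂ) (u r)‖
        ≤ ∫ r in ρ₁..ρ₂, ‖Fx r * (starRingEnd ℂ) (u r)‖ :=
          intervalIntegral.norm_integral_le_integral_norm hρle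
      _ = X := by
          rw [hX_def]
          apply intervalIntegral.integral_congr
          intro r _
          show ‖Fx r * (starRingEnd ℂ) (u r)‖ = ‖Fx r‖ * ‖u r‖
          simp [norm_mul]
  -- Cauchy–Schwarz via discriminants
  have hCS : X^2 ≤ Dp * M2 := by
    have hq : ∀ t : ℝ, 0 ≤ Dp * (t*t) + (2*X)*t + M2 := by
      intro t
      have h0 : 0 ≤ ∫ r in ρ₁..ρ₂, (t*‖Fx r‖ + ‖u r‖)^2 :=
        intervalIntegral.integral_nonneg hρle (fun r _ => sq_nonneg _)
      have hexp : (∫ r in ρ₁..ρ₂, (t*‖Fx r‖ + ‖u r‖)^2)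
          = (t*t) * Dp + ((2*t) * X + M2) := by
        rw [intervalIntegral.integral_congr
          (g := fun r => (t*t)*‖Fx r‖^2 + ((2*t)*(‖Fx r‖*‖u r‖) + n r))
          (fun r _ => by show (t*‖Fx r‖ + ‖u r‖)^2 = _; rw [hn_def]; ring)]
        rw [intervalIntegral.integral_add ((hII hFx2C).const_mul _)
          (((hII hFxuC).const_mul _).add (hII hnC.continuousOn))]
        rw [intervalIntegral.integral_add ((hII hFxuC).const_mul _) (hII hnC.continuousOn)]
        rw [intervalIntegral.integral_const_mul, intervalIntegral.integral_const_mul]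
      rw [hexp] at h0
      linarith [h0]
    have hd := discrim_le_zero hq
    rw [discrim] at hd
    nlinarith [hd]
  -- the integral in the goal equals Dp
  have hgoalD : (∫ r in ρ₁..ρ₂, ‖diracDx h m φ (diracD h m φ u) r‖^2) = Dp := by
    rw [hDp_def]
    apply intervalIntegral.integral_congr
    intro r hr
    show ‖diracDx h m φ (diracD h m φ u) r‖^2 = ‖Fx r‖^2
    rw [hDxeq r (hpos r (hIcc ▸ hr))]
  -- lower bound for h² Ig
  have hkey1 : 2*h*B₀*M2 ≤ h^2 * Ig := by
    have h2 := mul_le_mul_of_nonneg_left hIglb (sq_nonneg h)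
    have e : h^2 * (2*B₀/h*M2) = 2*h*B₀*M2 := by field_simp
    linarith
  have hXle : X ≤ Real.sqrt Dp * Real.sqrt M2 := by
    have h1 : X ≤ Real.sqrt (Dp * M2) := by
      rw [show X = Real.sqrt (X^2) from (Real.sqrt_sq hXnn).symm]
      exact Real.sqrt_le_sqrt hCS
    rwa [Real.sqrt_mul hDpnn] at h1
  have hsDnn : 0 ≤ Real.sqrt Dp := Real.sqrt_nonneg _
  constructor
  · rw [ge_iff_le, hgoalD]
    rcases eq_or_lt_of_le hM2nn with hM0 | hM0
    · rw [← hM0, Real.sqrt_zero, mul_zero]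
      exact Real.sqrt_nonneg _
    · have hsM : 0 < Real.sqrt M2 := Real.sqrt_pos.mpr hM0
      have hM2eq : Real.sqrt M2 * Real.sqrt M2 = M2 := Real.mul_self_sqrt hM2nn
      have c1 : 2*h*B₀*M2 ≤ Real.sqrt Dp * Real.sqrt M2 := by linarith [hkey1, hNX, hXle]
      have c2 : (2*h*B₀*Real.sqrt M2) * Real.sqrt M2 ≤ Real.sqrt Dp * Real.sqrt M2 := by
        calc (2*h*B₀*Real.sqrt M2) * Real.sqrt M2 = 2*h*B₀*(Real.sqrt M2 * Real.sqrt M2) := by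
              ring
          _ = 2*h*B₀*M2 := by rw [hM2eq]
          _ ≤ Real.sqrt Dp * Real.sqrt M2 := c1
      exact le_of_mul_le_mul_right c2 hsM
  · rw [ge_iff_le, hgoalD, hN2]
    have hβnn : (0:ℝ) ≤ Real.sqrt (2*h*B₀) := Real.sqrt_nonneg _
    have hN2nn : (0:ℝ) ≤ h^2*Ig := by positivity
    have hβsM : Real.sqrt (2*h*B₀) * Real.sqrt M2 ≤ Real.sqrt (h^2*Ig) := by
      rw [← Real.sqrt_mul (by positivity) M2]
      exact Real.sqrt_le_sqrt hkey1
    rcases eq_or_lt_of_le (Real.sqrt_nonneg (h^2*Ig)) with hN0 | hN0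
    · rw [← hN0, mul_zero]
      exact Real.sqrt_nonneg _
    · have hsN2 : Real.sqrt (h^2*Ig) * Real.sqrt (h^2*Ig) = h^2*Ig :=
        Real.mul_self_sqrt hN2nn
      have c1 : (Real.sqrt (2*h*B₀) * Real.sqrt (h^2*Ig)) * Real.sqrt (h^2*Ig)
          ≤ Real.sqrt Dp * Real.sqrt (h^2*Ig) := by
        have d1 : Real.sqrt (2*h*B₀) * (h^2*Ig) ≤ Real.sqrt (2*h*B₀) * X :=
          mul_le_mul_of_nonneg_left hNX hβnn
        have d2 : Real.sqrt (2*h*B₀) * X ≤ Real.sqrt (2*h*B₀) * (Real.sqrt Dp * Real.sqrt M2) :=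
          mul_le_mul_of_nonneg_left hXle hβnn
        have d3 : Real.sqrt Dp * (Real.sqrt (2*h*B₀) * Real.sqrt M2)
            ≤ Real.sqrt Dp * Real.sqrt (h^2*Ig) := mul_le_mul_of_nonneg_left hβsM hsDnn
        calc (Real.sqrt (2*h*B₀) * Real.sqrt (h^2*Ig)) * Real.sqrt (h^2*Ig)
            = Real.sqrt (2*h*B₀) * (h^2*Ig) := by rw [mul_assoc, hsN2]
          _ ≤ Real.sqrt (2*h*B₀) * (Real.sqrt Dp * Real.sqrt M2) := le_trans d1 d2
          _ = Real.sqrt Dp * (Real.sqrt (2*h*B₀) * Real.sqrt M2) := by ring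
          _ ≤ Real.sqrt Dp * Real.sqrt (h^2*Ig) := d3
      exact le_of_mul_le_mul_right c1 hN0
end

section
/- Integration-by-parts identity: for u ∈ H¹₀((ρ₁, ρ₂), ℂ) and m ∈ ℝ, ∫_{ρ₁}^{ρ₂} |(∂_r − (m+1/2)/r) u|² dr = ∫_{ρ₁}^{ρ₂} |(∂_r − 1/(2r)) u|² dr + ∫_{ρ₁}^{ρ₂} |m u / r|² dr. -/
/-! Write `v = u' - (1 / (2 r)) • u`. Then `u' - ((m + 1/2) / r) • u = v - (m / r) • u`, so the left
integrand is `‖v‖² + ‖(m / r) • u‖² - 2 ⟪v, (m / r) • u⟫`, and the cross term `⟪v, (m / r) • u⟫` is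
the derivative of `m / (2 r) * ‖u‖²`, which vanishes at both endpoints. -/

open Real Set

open MeasureTheory

open scoped RealInnerProductSpace

section

variable {E : Type*} [NormedAddCommGroup E] [InnerProductSpace ℝ E]

theorem HasDerivAt.div_mul_norm_sq {u : ℝ → E} {u' : E} {r : ℝ} (hu : HasDerivAt u u' r)
    (hr : r ≠ 0) (m : ℝ) :
    HasDerivAt (fun s => m / (2 * s) * ‖u s‖ ^ 2)
      ⟪u' - (1 / (2 * r)) • u r, (m / r) • u r⟫ r := by
  have hc : HasDerivAt (fun s => m / (2 * s)) (-(m / (2 * r ^ 2))) r := by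
    have := ((hasDerivAt_id r).const_mul 2).inv (mul_ne_zero two_ne_zero hr) |>.const_mul m
    simpa [div_eq_mul_inv, sq, mul_comm, mul_left_comm, mul_assoc] using this
  refine (hc.mul hu.norm_sq).congr_deriv ?_
  rw [inner_sub_left, real_inner_smul_left, real_inner_smul_right, real_inner_smul_right,
    real_inner_self_eq_norm_sq, real_inner_comm]
  field_simp
  ring

theorem integral_inner_sub_smul_smul_eq_zero {u u' : ℝ → E} {a b : ℝ}
    (h0 : (0 : ℝ) ∉ uIcc a b) (hu : ∀ r ∈ uIcc a b, HasDerivAt u (u' r) r)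
    (hu' : ContinuousOn u' (uIcc a b)) (ha : u a = 0) (hb : u b = 0) (m : ℝ) :
    ∫ r in a..b, ⟪u' r - (1 / (2 * r)) • u r, (m / r) • u r⟫ = 0 := by
  have hr : ∀ r ∈ uIcc a b, r ≠ 0 := fun r hr h => h0 (h ▸ hr)
  have hcu : ContinuousOn u (uIcc a b) := fun r hr => (hu r hr).continuousAt.continuousWithinAt
  rw [intervalIntegral.integral_eq_sub_of_hasDerivAt
    (fun r hr' => (hu r hr').div_mul_norm_sq (hr r hr') m)]
  · simp [ha, hb]
  · have hr2 : ∀ r ∈ uIcc a b, 2 * r ≠ 0 := fun r h => mul_ne_zero two_ne_zero (hr r h)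
    exact ContinuousOn.intervalIntegrable (by fun_prop (disch := first | exact hr | exact hr2))

theorem integral_norm_sub_smul_sq_eq {u u' : ℝ → E} {a b : ℝ}
    (h0 : (0 : ℝ) ∉ uIcc a b) (hu : ∀ r ∈ uIcc a b, HasDerivAt u (u' r) r)
    (hu' : ContinuousOn u' (uIcc a b)) (ha : u a = 0) (hb : u b = 0) (m : ℝ) :
    ∫ r in a..b, ‖u' r - ((m + 1 / 2) / r) • u r‖ ^ 2
      = (∫ r in a..b, ‖u' r - (1 / (2 * r)) • u r‖ ^ 2) + ∫ r in a..b, ‖(m / r) • u r‖ ^ 2 := by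
  have hr : ∀ r ∈ uIcc a b, r ≠ 0 := fun r hr h => h0 (h ▸ hr)
  have hcu : ContinuousOn u (uIcc a b) := fun r hr => (hu r hr).continuousAt.continuousWithinAt
  have hr2 : ∀ r ∈ uIcc a b, 2 * r ≠ 0 := fun r h => mul_ne_zero two_ne_zero (hr r h)
  have hexpand : EqOn (fun r => ‖u' r - ((m + 1 / 2) / r) • u r‖ ^ 2)
      (fun r => ‖u' r - (1 / (2 * r)) • u r‖ ^ 2 + ‖(m / r) • u r‖ ^ 2
        - 2 * ⟪u' r - (1 / (2 * r)) • u r, (m / r) • u r⟫) (uIcc a b) := by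
    intro r hr'
    have hsplit : ((m + 1 / 2) / r) • u r = (1 / (2 * r)) • u r + (m / r) • u r := by
      rw [← add_smul]; congr 1; field_simp [hr r hr']; ring
    simp only [hsplit, ← sub_sub, norm_sub_sq_real]
    ring
  have hA : IntervalIntegrable (fun r => ‖u' r - (1 / (2 * r)) • u r‖ ^ 2) volume a b :=
    ContinuousOn.intervalIntegrable (by fun_prop (disch := exact hr2))
  have hB : IntervalIntegrable (fun r => ‖(m / r) • u r‖ ^ 2) volume a b :=
    ContinuousOn.intervalIntegrable (by fun_prop (disch := exact hr))
  have hC : IntervalIntegrable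
      (fun r => 2 * ⟪u' r - (1 / (2 * r)) • u r, (m / r) • u r⟫) volume a b :=
    ContinuousOn.intervalIntegrable (by fun_prop (disch := first | exact hr | exact hr2))
  rw [intervalIntegral.integral_congr hexpand, intervalIntegral.integral_sub (hA.add hB) hC,
    intervalIntegral.integral_const_mul,
    integral_inner_sub_smul_smul_eq_zero h0 hu hu' ha hb, intervalIntegral.integral_add hA hB]
  ring

end

/-- Integration-by-parts identity: for u ∈ H¹₀((ρ₁, ρ₂), ℂ) and m ∈ ℝ,
∫|(∂_r − (m+1/2)/r)u|² = ∫|(∂_r − 1/(2r))u|² + ∫|m u/r|². -/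
theorem stmt17 (ρ₁ ρ₂ : ℝ) (hρ₁ : 0 < ρ₁) (hρ : ρ₁ < ρ₂) (m : ℝ)
    (u : ℝ → ℂ) (hu : ContDiff ℝ 1 u) (hu₁ : u ρ₁ = 0) (hu₂ : u ρ₂ = 0) :
    (∫ r in ρ₁..ρ₂, ‖deriv u r - (((m + 1/2) / r : ℝ) : ℂ) * u r‖ ^ 2)
      = (∫ r in ρ₁..ρ₂, ‖deriv u r - ((1 / (2 * r) : ℝ) : ℂ) * u r‖ ^ 2)
        + ∫ r in ρ₁..ρ₂, ‖((m / r : ℝ) : ℂ) * u r‖ ^ 2 := by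
  simp only [← Complex.real_smul]
  exact integral_norm_sub_smul_sq_eq (notMem_uIcc_of_lt hρ₁ (hρ₁.trans hρ))
    (fun r _ => (hu.differentiable one_ne_zero r).hasDerivAt)
    (hu.continuous_deriv le_rfl).continuousOn hu₁ hu₂ m
end
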